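/- The Pivot(k) pattern occurs as a sub-pattern in every subdivision of itself; hence ForbSP(Pivot(k)) = ForbTM(Pivot(k)). -/

import Mathlib

/-- A pattern: a set of points with an equivalence relation `sim` (whose classes
are the parts), and symmetric relations `pos` (positive edges) and `neg`
(negative edges), each disjoint from `sim`. -/
structure Pattern where
  X : Type
  sim : X → X → Prop
  pos : X → X → Prop
  neg : X → X → Prop
  sim_equiv : Equivalence sim
  pos_symm : ∀ ⦃x y⦄, pos x y → pos y x
  neg_symm : ∀ ⦃x y⦄, neg x y → neg y x
  sim_pos : ∀ ⦃x y⦄, sim x y → ¬ pos x y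
  sim_neg : ∀ ⦃x y⦄, sim x y → ¬ neg x y

/-- A homomorphism of patterns. -/
def IsHom (P Q : Pattern) (h : P.X → Q.X) : Prop :=
  (∀ x y, P.sim x y → Q.sim (h x) (h y)) ∧
  (∀ x y, P.pos x y → Q.pos (h x) (h y)) ∧
  (∀ x y, P.neg x y → Q.neg (h x) (h y))

/-- A part-preserving map: non-equivalent points map to non-equivalent points. -/
def PreservesParts (P Q : Pattern) (h : P.X → Q.X) : Prop :=
  ∀ x y, ¬ P.sim x y → ¬ Q.sim (h x) (h y)

/-- `P` occurs as a sub-pattern in `Q`. -/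
def SP (P Q : Pattern) : Prop :=
  ∃ h : P.X → Q.X, IsHom P Q h ∧ PreservesParts P Q h

/-- New points subdividing the positive edges between the parts of `u` and `v`. -/
def PosZ (P : Pattern) (u v : P.X) : Type :=
  {p : P.X × P.X // P.sim p.1 u ∧ P.sim p.2 v ∧ P.pos p.1 p.2}

/-- New points subdividing the negative edges between the parts of `u` and `v`:
`false` is the point attached to the `u`-side, `true` to the `v`-side. -/
def NegZ (P : Pattern) (u v : P.X) : Type :=
  {p : P.X × P.X // P.sim p.1 u ∧ P.sim p.2 v ∧ P.neg p.1 p.2} × Bool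

/-- The subdivision of the pattern `P` at the (distinct) parts of `u` and `v`. -/
def SubdivOne (P : Pattern) (u v : P.X) : Pattern where
  X := P.X ⊕ (PosZ P u v ⊕ NegZ P u v)
  sim := fun a b => match a, b with
    | .inl x, .inl y => P.sim x y
    | .inr _, .inr _ => True
    | _, _ => False
  pos := fun a b => match a, b with
    | .inl x, .inl y => P.pos x y ∧ ¬((P.sim x u ∧ P.sim y v) ∨ (P.sim x v ∧ P.sim y u))
    | .inl x, .inr (.inl z) => x = z.1.1 ∨ x = z.1.2
    | .inr (.inl z), .inl x => x = z.1.1 ∨ x = z.1.2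
    | _, _ => False
  neg := fun a b => match a, b with
    | .inl x, .inl y => P.neg x y ∧ ¬((P.sim x u ∧ P.sim y v) ∨ (P.sim x v ∧ P.sim y u))
    | .inl x, .inr (.inr z) => (z.2 = false ∧ x = z.1.1.1) ∨ (z.2 = true ∧ x = z.1.1.2)
    | .inr (.inr z), .inl x => (z.2 = false ∧ x = z.1.1.1) ∨ (z.2 = true ∧ x = z.1.1.2)
    | _, _ => False
  sim_equiv := by
    refine ⟨?_, ?_, ?_⟩
    · rintro (x | z)
      · exact P.sim_equiv.refl x
      · trivial
    · rintro (x | z) (y | w) h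
      · exact P.sim_equiv.symm h
      · exact h.elim
      · exact h.elim
      · trivial
    · rintro (x | z) (y | w) (t | s) h1 h2
      · exact P.sim_equiv.trans h1 h2
      · exact h2.elim
      · exact h1.elim
      · exact h1.elim
      · exact h1.elim
      · exact h1.elim
      · exact h2.elim
      · trivial
  pos_symm := by
    rintro (x | (z | z)) (y | (w | w)) h <;>
      first
        | exact h.elim
        | skip
    · exact ⟨P.pos_symm h.1, fun hc => h.2 (hc.elim (fun c => Or.inr ⟨c.2, c.1⟩) (fun c => Or.inl ⟨c.2, c.1⟩))⟩
    · exact h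
    · exact h
  neg_symm := by
    rintro (x | (z | z)) (y | (w | w)) h <;>
      first
        | exact h.elim
        | skip
    · exact ⟨P.neg_symm h.1, fun hc => h.2 (hc.elim (fun c => Or.inr ⟨c.2, c.1⟩) (fun c => Or.inl ⟨c.2, c.1⟩))⟩
    · exact h
    · exact h
  sim_pos := by
    rintro (x | (z | z)) (y | (w | w)) h hp <;>
      first
        | exact h
        | exact hp
        | exact P.sim_pos h hp.1
  sim_neg := by
    rintro (x | (z | z)) (y | (w | w)) h hp <;>
      first
        | exact h
        | exact hp
        | exact P.sim_neg h hp.1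

/-- One subdivision step between patterns. -/
def SubdivStep (P Q : Pattern) : Prop :=
  ∃ u v : P.X, ¬ P.sim u v ∧ Q = SubdivOne P u v

/-- `Q` is obtained from `P` by a (possibly empty) sequence of subdivisions. -/
def IsSubdivision : Pattern → Pattern → Prop :=
  Relation.ReflTransGen SubdivStep

/-- `P` occurs as a topological minor in `Q`. -/
def TM (P Q : Pattern) : Prop :=
  ∃ P' : Pattern, IsSubdivision P P' ∧ SP P' Q

/-- A binary CSP instance: finitely many variables, finite domains, and a
symmetric family of binary constraints. -/
structure CSPInstance where
  V : Type
  finV : Finite V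
  D : V → Type
  finD : ∀ v, Finite (D v)
  R : ∀ u v : V, D u → D v → Prop
  symmR : ∀ u v a b, R u v a b → R v u b a

/-- The pattern associated with a binary CSP instance. -/
def Pat (I : CSPInstance) : Pattern where
  X := Σ v : I.V, I.D v
  sim := fun x y => x.1 = y.1
  pos := fun x y => x.1 ≠ y.1 ∧ I.R x.1 y.1 x.2 y.2
  neg := fun x y => x.1 ≠ y.1 ∧ ¬ I.R x.1 y.1 x.2 y.2
  sim_equiv := ⟨fun _ => rfl, Eq.symm, Eq.trans⟩
  pos_symm := fun _ _ h => ⟨Ne.symm h.1, I.symmR _ _ _ _ h.2⟩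
  neg_symm := fun _ _ h => ⟨Ne.symm h.1, fun hr => h.2 (I.symmR _ _ _ _ hr)⟩
  sim_pos := fun _ _ h hp => hp.1 h
  sim_neg := fun _ _ h hn => hn.1 h

/-- The class of instances avoiding `P` as a sub-pattern. -/
def ForbSP (P : Pattern) : Set CSPInstance := {I | ¬ SP P (Pat I)}

/-- The class of instances avoiding `P` as a topological minor. -/
def ForbTM (P : Pattern) : Set CSPInstance := {I | ¬ TM P (Pat I)}

/-- The pattern `Pivot(k)`: a star pattern with three branches each consisting
of `k` negative edges.  The central part has two points: the merged point
`Sum.inl false` (meeting branches `0` and `1`) and `Sum.inl true` (meeting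
branch `2`).  The point `Sum.inr (i, j, b)` is the point of the `j`-th part of
branch `i` on the side nearer the centre (`b = false`) or farther (`b = true`). -/
def PivotPattern (k : ℕ) : Pattern where
  X := Bool ⊕ (Fin 3 × Fin k × Bool)
  sim := fun a b => match a, b with
    | .inl _, .inl _ => True
    | .inr x, .inr y => x.1 = y.1 ∧ x.2.1 = y.2.1
    | _, _ => False
  pos := fun _ _ => False
  neg := fun a b => match a, b with
    | .inl c, .inr x =>
        ((c = false ∧ x.1.val ≤ 1) ∨ (c = true ∧ x.1.val = 2)) ∧
          x.2.1.val = 0 ∧ x.2.2 = false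
    | .inr x, .inl c =>
        ((c = false ∧ x.1.val ≤ 1) ∨ (c = true ∧ x.1.val = 2)) ∧
          x.2.1.val = 0 ∧ x.2.2 = false
    | .inr x, .inr y => x.1 = y.1 ∧
        ((y.2.1.val = x.2.1.val + 1 ∧ x.2.2 = true ∧ y.2.2 = false) ∨
         (x.2.1.val = y.2.1.val + 1 ∧ y.2.2 = true ∧ x.2.2 = false))
    | _, _ => False
  sim_equiv := by
    refine ⟨?_, ?_, ?_⟩
    · rintro (c | x)
      · trivial
      · exact ⟨rfl, rfl⟩
    · rintro (c | x) (d | y) h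
      · trivial
      · exact h.elim
      · exact h.elim
      · exact ⟨h.1.symm, h.2.symm⟩
    · rintro (c | x) (d | y) (e | z) h1 h2
      · trivial
      · exact h2.elim
      · exact h1.elim
      · exact h1.elim
      · exact h1.elim
      · exact h1.elim
      · exact h2.elim
      · exact ⟨h1.1.trans h2.1, h1.2.trans h2.2⟩
  pos_symm := fun _ _ h => h.elim
  neg_symm := by
    rintro (c | x) (d | y) h
    · exact h.elim
    · exact h
    · exact h
    · exact ⟨h.1.symm, h.2.symm⟩
  sim_pos := fun _ _ _ hp => hp
  sim_neg := by
    rintro (c | x) (d | y) h hn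
    · exact hn
    · exact h
    · exact h
    · obtain ⟨-, h2⟩ := h
      rcases hn.2 with ⟨h1, -⟩ | ⟨h1, -⟩ <;> rw [h2] at h1 <;> omega

/-!
Let `Pivot(k)` occur in `Q`, and subdivide `Q` at two parts. If no edge of the occurrence runs
between these parts, the occurrence survives unchanged. Otherwise the image of some edge `e` does,
and since occurrences preserve parts, the occurrence lifts to an occurrence of the subdivision of
`Pivot(k)` at `e` in the subdivision of `Q`. Finally `Pivot(k)` occurs in its own subdivision at
`e`: send the outer part of `e` to the new part and every later part of that branch one part
outward. Induction on the subdivision steps and transitivity of occurrence give both claims.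
-/

theorem SP.refl (P : Pattern) : SP P P :=
  ⟨id, ⟨fun _ _ => id, fun _ _ => id, fun _ _ => id⟩, fun _ _ => id⟩

theorem SP.trans {P Q R : Pattern} : SP P Q → SP Q R → SP P R
  | ⟨f, ⟨fs, fp, fn⟩, fpp⟩, ⟨g, ⟨gs, gp, gn⟩, gpp⟩ =>
    ⟨g ∘ f, ⟨fun x y h => gs _ _ (fs x y h), fun x y h => gp _ _ (fp x y h),
      fun x y h => gn _ _ (fn x y h)⟩, fun x y h => gpp _ _ (fpp x y h)⟩

theorem forbSP_eq_forbTM_of_sp_subdivision {P : Pattern}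
    (hP : ∀ Q, IsSubdivision P Q → SP P Q) : ForbSP P = ForbTM P := by
  ext I
  exact ⟨fun h ⟨Q, hQ, hSP⟩ => h ((hP Q hQ).trans hSP), fun h hSP => h ⟨P, .refl, hSP⟩⟩

theorem PreservesParts.sim_of_sim {P Q : Pattern} {h : P.X → Q.X}
    (hp : PreservesParts P Q h) {x y : P.X} (hxy : Q.sim (h x) (h y)) : P.sim x y :=
  not_not.mp fun hn => hp x y hn hxy

theorem sp_subdivOne_of_not_crossing {P Q : Pattern} {h : P.X → Q.X}
    (hh : IsHom P Q h) (hp : PreservesParts P Q h) {u v : Q.X}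
    (hcross : ∀ x y, P.pos x y ∨ P.neg x y → Q.sim (h x) u → ¬ Q.sim (h y) v) :
    SP P (SubdivOne Q u v) := by
  have hcross' : ∀ x y, P.pos x y ∨ P.neg x y →
      ¬((Q.sim (h x) u ∧ Q.sim (h y) v) ∨ (Q.sim (h x) v ∧ Q.sim (h y) u)) := by
    rintro x y hxy (⟨hu, hv⟩ | ⟨hv, hu⟩)
    · exact hcross x y hxy hu hv
    · exact hcross y x (hxy.imp (P.pos_symm ·) (P.neg_symm ·)) hu hv
  exact ⟨fun x => .inl (h x), ⟨hh.1, fun x y hxy => ⟨hh.2.1 x y hxy, hcross' x y (.inl hxy)⟩,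
    fun x y hxy => ⟨hh.2.2 x y hxy, hcross' x y (.inr hxy)⟩⟩, hp⟩

theorem sp_subdivOne_subdivOne {P Q : Pattern} {h : P.X → Q.X}
    (hh : IsHom P Q h) (hp : PreservesParts P Q h) {x₀ y₀ : P.X} {u v : Q.X}
    (hu : Q.sim (h x₀) u) (hv : Q.sim (h y₀) v) :
    SP (SubdivOne P x₀ y₀) (SubdivOne Q u v) := by
  have E := Q.sim_equiv
  have hcross : ∀ x y, ((Q.sim (h x) u ∧ Q.sim (h y) v) ∨ (Q.sim (h x) v ∧ Q.sim (h y) u)) →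
      ((P.sim x x₀ ∧ P.sim y y₀) ∨ (P.sim x y₀ ∧ P.sim y x₀)) := by
    rintro x y (⟨hxu, hyv⟩ | ⟨hxv, hyu⟩)
    · exact .inl ⟨hp.sim_of_sim (E.trans hxu (E.symm hu)),
        hp.sim_of_sim (E.trans hyv (E.symm hv))⟩
    · exact .inr ⟨hp.sim_of_sim (E.trans hxv (E.symm hv)),
        hp.sim_of_sim (E.trans hyu (E.symm hu))⟩
  let f : (SubdivOne P x₀ y₀).X → (SubdivOne Q u v).X
    | .inl x => .inl (h x)
    | .inr (.inl z) => .inr (.inl ⟨(h z.1.1, h z.1.2), E.trans (hh.1 _ _ z.2.1) hu,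
        E.trans (hh.1 _ _ z.2.2.1) hv, hh.2.1 _ _ z.2.2.2⟩)
    | .inr (.inr (z, b)) => .inr (.inr (⟨(h z.1.1, h z.1.2), E.trans (hh.1 _ _ z.2.1) hu,
        E.trans (hh.1 _ _ z.2.2.1) hv, hh.2.2 _ _ z.2.2.2⟩, b))
  refine ⟨f, ⟨?_, ?_, ?_⟩, ?_⟩
  · rintro (x | z | z) (y | w | w) hxy
    · exact hh.1 x y hxy
    all_goals first | exact hxy.elim | trivial
  · rintro (x | z | z) (y | w | w) hxy <;> try exact hxy.elim
    · exact ⟨hh.2.1 x y hxy.1, mt (hcross x y) hxy.2⟩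
    · exact hxy.imp (congrArg h) (congrArg h)
    · exact hxy.imp (congrArg h) (congrArg h)
  · rintro (x | z | z) (y | w | w) hxy <;> try exact hxy.elim
    · exact ⟨hh.2.2 x y hxy.1, mt (hcross x y) hxy.2⟩
    · exact hxy.imp (.imp_right (congrArg h)) (.imp_right (congrArg h))
    · exact hxy.imp (.imp_right (congrArg h)) (.imp_right (congrArg h))
  · rintro (x | z | z) (y | w | w) hxy
    · exact hp x y hxy
    all_goals first | exact id | exact absurd trivial hxy

theorem sp_subdivOne_swap (P : Pattern) (u v : P.X) : SP (SubdivOne P v u) (SubdivOne P u v) := by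
  let f : (SubdivOne P v u).X → (SubdivOne P u v).X
    | .inl x => .inl x
    | .inr (.inl z) => .inr (.inl ⟨(z.1.2, z.1.1), z.2.2.1, z.2.1, P.pos_symm z.2.2.2⟩)
    | .inr (.inr (z, b)) => .inr (.inr (⟨(z.1.2, z.1.1), z.2.2.1, z.2.1, P.neg_symm z.2.2.2⟩, !b))
  refine ⟨f, ⟨?_, ?_, ?_⟩, ?_⟩
  · rintro (x | z | z) (y | w | w) hxy <;> first | exact hxy.elim | trivial
  · rintro (x | z | z) (y | w | w) hxy <;> try exact hxy.elim
    · exact ⟨hxy.1, fun h => hxy.2 h.symm⟩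
    · exact hxy.symm
    · exact hxy.symm
  · rintro (x | z | ⟨z, b⟩) (y | w | ⟨w, c⟩) hxy <;> try exact hxy.elim
    · exact ⟨hxy.1, fun h => hxy.2 h.symm⟩
    · rcases hxy with ⟨rfl, rfl⟩ | ⟨rfl, rfl⟩
      · exact .inr ⟨rfl, rfl⟩
      · exact .inl ⟨rfl, rfl⟩
    · rcases hxy with ⟨rfl, rfl⟩ | ⟨rfl, rfl⟩
      · exact .inr ⟨rfl, rfl⟩
      · exact .inl ⟨rfl, rfl⟩
  · rintro (x | z | z) (y | w | w) hxy <;> first | exact id | exact hxy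

theorem sp_of_isSubdivision_of_sp_subdivOne {P Q : Pattern}
    (hP : ∀ x y, P.pos x y ∨ P.neg x y → SP P (SubdivOne P x y)) (hQ : IsSubdivision P Q) :
    SP P Q := by
  induction hQ with
  | refl => exact .refl P
  | @tail Q _ _ hstep ih =>
    obtain ⟨u, v, -, rfl⟩ := hstep
    obtain ⟨h, hh, hp⟩ := ih
    by_cases hcross : ∃ x y, (P.pos x y ∨ P.neg x y) ∧ Q.sim (h x) u ∧ Q.sim (h y) v
    · obtain ⟨x, y, hxy, hu, hv⟩ := hcross
      exact (hP x y hxy).trans (sp_subdivOne_subdivOne hh hp hu hv)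
    · push Not at hcross
      exact sp_subdivOne_of_not_crossing hh hp hcross

def NegZ.ofNeg {P : Pattern} {x y : P.X} (hxy : P.neg x y) (b : Bool) : NegZ P x y :=
  (⟨(x, y), P.sim_equiv.refl x, P.sim_equiv.refl y, hxy⟩, b)

namespace PivotPattern

variable {k : ℕ}

def prev (i : Fin 3) : Fin k → (PivotPattern k).X
  | ⟨0, _⟩ => .inl (decide (i = 2))
  | ⟨j + 1, hj⟩ => .inr (i, ⟨j, Nat.lt_of_succ_lt hj⟩, true)

theorem neg_prev (i : Fin 3) (m : Fin k) :
    (PivotPattern k).neg (prev i m) (.inr (i, m, false)) := by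
  obtain ⟨_ | j, hj⟩ := m
  · refine ⟨?_, rfl, rfl⟩
    fin_cases i <;> simp
  · exact ⟨rfl, .inl ⟨rfl, rfl, rfl⟩⟩

theorem prev_eq_inl {i : Fin 3} {m : Fin k} {c : Bool}
    (hc : (c = false ∧ i.val ≤ 1) ∨ (c = true ∧ i.val = 2)) (hm : m.val = 0) :
    prev i m = .inl c := by
  obtain ⟨_, _⟩ := m
  subst hm
  refine congrArg Sum.inl ?_
  rcases hc with ⟨rfl, hi⟩ | ⟨rfl, hi⟩ <;> simp [Fin.ext_iff] <;> omega

theorem prev_eq_inr {i : Fin 3} {m j : Fin k} (hm : m.val = j.val + 1) :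
    prev i m = .inr (i, j, true) := by
  obtain ⟨_, _⟩ := m
  subst hm
  rfl

theorem exists_prev_of_neg {x y : (PivotPattern k).X} (hxy : (PivotPattern k).neg x y) :
    ∃ i m, (x = prev i m ∧ y = .inr (i, m, false)) ∨ (x = .inr (i, m, false) ∧ y = prev i m) := by
  rcases x with c | ⟨i, j, b⟩ <;> rcases y with c' | ⟨i', j', b'⟩
  · exact hxy.elim
  · obtain ⟨hc, hj, rfl⟩ := hxy
    exact ⟨i', j', .inl ⟨(prev_eq_inl hc hj).symm, rfl⟩⟩
  · obtain ⟨hc, hj, rfl⟩ := hxy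
    exact ⟨i, j, .inr ⟨rfl, (prev_eq_inl hc hj).symm⟩⟩
  · obtain ⟨rfl, ⟨hj, rfl, rfl⟩ | ⟨hj, rfl, rfl⟩⟩ := hxy
    · exact ⟨i, j', .inl ⟨(prev_eq_inr hj).symm, rfl⟩⟩
    · exact ⟨i, j, .inr ⟨rfl, (prev_eq_inr hj).symm⟩⟩

/- A named pattern rather than the bare `SubdivOne` term: there the point `.inr (i₀, m, false)`
is typed `Bool ⊕ _`, not `(PivotPattern k).X`, which breaks `rw` in goals mentioning it. -/
def subdivAt (i₀ : Fin 3) (m : Fin k) : Pattern :=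
  SubdivOne (PivotPattern k) (prev i₀ m) (.inr (i₀, m, false))

/- The part `m` of branch `i₀` goes to the new part, the parts beyond it move one part outward
(the last one is dropped), and everything else stays. -/
def shift (i₀ : Fin 3) (m : Fin k) : (PivotPattern k).X → (subdivAt i₀ m).X
  | .inl c => .inl (.inl c)
  | .inr (i, j, b) =>
      if i = i₀ ∧ m < j then .inl (.inr (i, ⟨j - 1, (Nat.sub_le _ _).trans_lt j.isLt⟩, b))
      else if i = i₀ ∧ j = m then .inr (.inr (NegZ.ofNeg (neg_prev i₀ m) b))
      else .inl (.inr (i, j, b))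

theorem shift_of_lt {i₀ i : Fin 3} {m j : Fin k} (hi : i = i₀) (hj : m < j) (b : Bool) :
    shift i₀ m (.inr (i, j, b)) =
      .inl (.inr (i, ⟨j - 1, (Nat.sub_le _ _).trans_lt j.isLt⟩, b)) :=
  if_pos ⟨hi, hj⟩

theorem shift_self (i₀ : Fin 3) (m : Fin k) (b : Bool) :
    shift i₀ m (.inr (i₀, m, b)) = .inr (.inr (NegZ.ofNeg (neg_prev i₀ m) b)) :=
  (if_neg fun h => lt_irrefl m h.2).trans (if_pos ⟨rfl, rfl⟩)

theorem shift_of_not_le {i₀ i : Fin 3} {m j : Fin k} (h : ¬(i = i₀ ∧ m ≤ j)) (b : Bool) :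
    shift i₀ m (.inr (i, j, b)) = .inl (.inr (i, j, b)) :=
  (if_neg fun h' => h ⟨h'.1, h'.2.le⟩).trans (if_neg fun h' => h ⟨h'.1, h'.2.ge⟩)

theorem shift_inr_cases (i₀ i : Fin 3) (m j : Fin k) (b : Bool) :
    (i = i₀ ∧ m < j ∧ shift i₀ m (.inr (i, j, b)) =
        .inl (.inr (i, ⟨j - 1, (Nat.sub_le _ _).trans_lt j.isLt⟩, b))) ∨
      (i = i₀ ∧ j = m ∧ shift i₀ m (.inr (i, j, b)) = .inr (.inr (NegZ.ofNeg (neg_prev i₀ m) b))) ∨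
      (¬(i = i₀ ∧ m ≤ j) ∧ shift i₀ m (.inr (i, j, b)) = .inl (.inr (i, j, b))) := by
  by_cases h1 : i = i₀ ∧ m < j
  · exact .inl ⟨h1.1, h1.2, shift_of_lt h1.1 h1.2 b⟩
  by_cases h2 : i = i₀ ∧ j = m
  · obtain ⟨rfl, rfl⟩ := h2
    exact .inr (.inl ⟨rfl, rfl, shift_self _ _ b⟩)
  have h3 : ¬(i = i₀ ∧ m ≤ j) := fun h =>
    (lt_or_eq_of_le h.2).elim (fun h' => h1 ⟨h.1, h'⟩) fun h' => h2 ⟨h.1, h'.symm⟩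
  exact .inr (.inr ⟨h3, shift_of_not_le h3 b⟩)

theorem shift_prev_of_not_lt {i₀ i : Fin 3} {m m' : Fin k} (h : ¬(i = i₀ ∧ m < m')) :
    shift i₀ m (prev i m') = .inl (prev i m') := by
  rcases m' with ⟨_ | j, hj⟩
  · rfl
  · exact shift_of_not_le (fun h' => h ⟨h'.1, Fin.lt_def.2 (Nat.lt_succ_of_le h'.2)⟩) true

/- Only the subdivided edge is removed: two parts of `Pivot(k)` share at most one edge. -/
theorem subdivAt_neg_prev {i₀ i : Fin 3} {m m' : Fin k} (h : ¬(i = i₀ ∧ m' = m)) :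
    (subdivAt i₀ m).neg (.inl (prev i m')) (.inl (.inr (i, m', false))) := by
  refine ⟨neg_prev i m', ?_⟩
  rcases m with ⟨_ | j, hj⟩ <;> rcases m' with ⟨_ | j', hj'⟩ <;>
    simp [prev, PivotPattern, Fin.ext_iff] at h ⊢ <;> omega

theorem neg_shift_prev (i₀ : Fin 3) (m : Fin k) (i : Fin 3) (m' : Fin k) :
    (subdivAt i₀ m).neg (shift i₀ m (prev i m')) (shift i₀ m (.inr (i, m', false))) := by
  by_cases hm : i = i₀ ∧ m < m'
  · obtain ⟨rfl, hm⟩ := hm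
    obtain ⟨_ | j, hj⟩ := m'
    · exact absurd hm (Nat.not_lt_zero _)
    have hprev : prev i ⟨j + 1, hj⟩ = .inr (i, ⟨j, Nat.lt_of_succ_lt hj⟩, true) := rfl
    rw [hprev, shift_of_lt rfl hm]
    rcases (Nat.le_of_lt_succ hm).eq_or_lt with hjm | hjm
    · obtain rfl : m = ⟨j, Nat.lt_of_succ_lt hj⟩ := Fin.ext hjm
      rw [shift_self]
      exact .inr ⟨rfl, rfl⟩
    · rw [shift_of_lt (j := ⟨j, _⟩) rfl hjm,
        ← prev_eq_inr (m := ⟨j, Nat.lt_of_succ_lt hj⟩) (by simp; omega)]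
      exact subdivAt_neg_prev (by simp [Fin.ext_iff]; omega)
  · rw [shift_prev_of_not_lt hm]
    by_cases he : i = i₀ ∧ m' = m
    · obtain ⟨rfl, rfl⟩ := he
      rw [shift_self]
      exact .inl ⟨rfl, rfl⟩
    · have hle : ¬(i = i₀ ∧ m ≤ m') :=
        fun h => he ⟨h.1, le_antisymm (not_lt.1 fun h' => hm ⟨h.1, h'⟩) h.2⟩
      rw [shift_of_not_le hle]
      exact subdivAt_neg_prev he

theorem sim_shift (i₀ : Fin 3) (m : Fin k) {x y : (PivotPattern k).X}
    (hxy : (PivotPattern k).sim x y) : (subdivAt i₀ m).sim (shift i₀ m x) (shift i₀ m y) := by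
  rcases x with c | ⟨i, j, b⟩ <;> rcases y with c' | ⟨i', j', b'⟩
  · trivial
  · exact hxy.elim
  · exact hxy.elim
  · obtain ⟨rfl, rfl⟩ : i = i' ∧ j = j' := hxy
    rcases shift_inr_cases i₀ i m j b with ⟨h1, h2, e⟩ | ⟨h1, h2, e⟩ | ⟨h3, e⟩
    · rw [e, shift_of_lt h1 h2]
      exact ⟨rfl, rfl⟩
    · subst h1 h2
      rw [e, shift_self]
      trivial
    · rw [e, shift_of_not_le h3]
      exact ⟨rfl, rfl⟩

theorem sim_of_sim_shift (i₀ : Fin 3) (m : Fin k) {x y : (PivotPattern k).X}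
    (h : (subdivAt i₀ m).sim (shift i₀ m x) (shift i₀ m y)) : (PivotPattern k).sim x y := by
  rcases x with c | ⟨i, j, b⟩ <;> rcases y with c' | ⟨i', j', b'⟩
  · trivial
  · rcases shift_inr_cases i₀ i' m j' b' with ⟨-, -, e⟩ | ⟨-, -, e⟩ | ⟨-, e⟩ <;>
      rw [e] at h <;> exact h
  · rcases shift_inr_cases i₀ i m j b with ⟨-, -, e⟩ | ⟨-, -, e⟩ | ⟨-, e⟩ <;>
      rw [e] at h <;> exact h
  · rcases shift_inr_cases i₀ i m j b with ⟨h1, h2, e⟩ | ⟨h1, h2, e⟩ | ⟨h3, e⟩ <;>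
    rcases shift_inr_cases i₀ i' m j' b' with ⟨h1', h2', e'⟩ | ⟨h1', h2', e'⟩ | ⟨h3', e'⟩ <;>
    rw [e, e'] at h <;>
    simp_all [subdivAt, SubdivOne, PivotPattern, Fin.ext_iff] <;> omega

theorem sp_subdivAt (i₀ : Fin 3) (m : Fin k) : SP (PivotPattern k) (subdivAt i₀ m) := by
  refine ⟨shift i₀ m, ⟨fun _ _ => sim_shift i₀ m, fun _ _ h => h.elim, fun x y hxy => ?_⟩,
    fun _ _ => mt (sim_of_sim_shift i₀ m)⟩
  obtain ⟨i, m', ⟨rfl, rfl⟩ | ⟨rfl, rfl⟩⟩ := exists_prev_of_neg hxy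
  · exact neg_shift_prev i₀ m i m'
  · exact (subdivAt i₀ m).neg_symm (neg_shift_prev i₀ m i m')

theorem sp_subdivOne_of_neg {x y : (PivotPattern k).X} (hxy : (PivotPattern k).neg x y) :
    SP (PivotPattern k) (SubdivOne (PivotPattern k) x y) := by
  obtain ⟨i, m, ⟨rfl, rfl⟩ | ⟨rfl, rfl⟩⟩ := exists_prev_of_neg hxy
  · exact sp_subdivAt i m
  · exact (sp_subdivAt i m).trans (sp_subdivOne_swap _ _ _)

end PivotPattern

theorem pivot_SP_subdivision_and_ForbSP_eq_ForbTM_general (k : ℕ) :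
    (∀ Q : Pattern, IsSubdivision (PivotPattern k) Q → SP (PivotPattern k) Q) ∧
    ForbSP (PivotPattern k) = ForbTM (PivotPattern k) := by
  have hSP : ∀ Q, IsSubdivision (PivotPattern k) Q → SP (PivotPattern k) Q :=
    fun _ => sp_of_isSubdivision_of_sp_subdivOne fun _ _ hxy =>
      hxy.elim False.elim PivotPattern.sp_subdivOne_of_neg
  exact ⟨hSP, forbSP_eq_forbTM_of_sp_subdivision hSP⟩

/-- `Pivot(k)` occurs as a sub-pattern in every subdivision of
itself; hence `ForbSP(Pivot(k)) = ForbTM(Pivot(k))`. -/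
theorem pivot_SP_subdivision_and_ForbSP_eq_ForbTM (k : ℕ) (hk : 0 < k) :
    (∀ Q : Pattern, IsSubdivision (PivotPattern k) Q → SP (PivotPattern k) Q) ∧
    ForbSP (PivotPattern k) = ForbTM (PivotPattern k) :=
  pivot_SP_subdivision_and_ForbSP_eq_ForbTM_general k
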